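/- Suppose L satisfies the entropy-information inequality EI(Φ) with growth function Φ(r) = α·log(A + r/β), where α, β > 0 and A ≥ 1. Then the modified Nash inequality ‖f‖₂^{2α+2} ≤ ( A·‖f‖₂² + I(f²)/β )^{α} · ‖f‖₁² holds for every f ∈ ℓ²(μ) with f(x) ≠ 0 for all x ∈ X. -/

import Mathlib

open Real Filter MeasureTheory Set

/-- `M₁(x) = ∑_{y ≠ x} k(x,y)`. -/
noncomputable def M1fn {X : Type*} (k : X → X → ℝ) (x : X) : ℝ :=
  ∑' y : {y : X // y ≠ x}, k x y

/-- The standing assumptions on the transition rates and the invariant probability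
measure: nonnegative off-diagonal rates, summable rows, `k(x,x) = -M₁(x)`,
a strictly positive probability density and detailed balance. -/
def MarkovSetting {X : Type*} (k : X → X → ℝ) (μ : X → ℝ) : Prop :=
  (∀ x y, x ≠ y → 0 ≤ k x y) ∧
  (∀ x : X, Summable fun y : {y : X // y ≠ x} => k x y) ∧
  (∀ x : X, k x x = -M1fn k x) ∧
  (∀ x, 0 < μ x) ∧ (∑' x, μ x) = 1 ∧
  (∀ x y, μ x * k x y = μ y * k y x)

/-- The entropy `Ent_μ(f)`. -/
noncomputable def entFn {X : Type*} (μ f : X → ℝ) : ℝ :=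
  (∑' x, f x * Real.log (f x) * μ x) -
    (∑' x, f x * μ x) * Real.log (∑' x, f x * μ x)

/-- The Fisher information `I(f) = (1/2) ∑_{x,y} k(x,y)(f(y)-f(x))(log f(y)-log f(x)) μ(x)`. -/
noncomputable def fisherFn {X : Type*} (k : X → X → ℝ) (μ f : X → ℝ) : ℝ :=
  (1/2) * ∑' p : X × X,
    k p.1 p.2 * (f p.2 - f p.1) * (Real.log (f p.2) - Real.log (f p.1)) * μ p.1

/-- Finiteness of the Fisher information. -/
def FisherFinite {X : Type*} (k : X → X → ℝ) (μ f : X → ℝ) : Prop :=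
  Summable fun p : X × X =>
    k p.1 p.2 * (f p.2 - f p.1) * (Real.log (f p.2) - Real.log (f p.1)) * μ p.1

/-- A growth function: strictly increasing, concave, `C¹` and positive on `(0,∞)`. -/
def GrowthFun (Φ : ℝ → ℝ) : Prop :=
  StrictMonoOn Φ (Ioi 0) ∧ ConcaveOn ℝ (Ioi 0) Φ ∧
    ContDiffOn ℝ 1 Φ (Ioi 0) ∧ ∀ r : ℝ, 0 < r → 0 < Φ r

/-- The entropy-information inequality `EI(Φ)`:
`Ent_μ(f) ≤ Φ(I(f))` for all probability densities `f ∈ P_*(X)` with finite entropy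
and finite Fisher information. -/
def EIineq {X : Type*} (k : X → X → ℝ) (μ : X → ℝ) (Φ : ℝ → ℝ) : Prop :=
  ∀ f : X → ℝ, (∀ x, 0 < f x) → (∑' x, f x * μ x) = 1 →
    (Summable fun x => f x * Real.log (f x) * μ x) →
    FisherFinite k μ f →
    entFn μ f ≤ Φ (fisherFn k μ f)

open scoped ENNReal

/-- The Fisher information as an extended nonnegative real (all summands are
nonnegative, so this is the honest value in `[0,∞]`). -/
noncomputable def fisherE {X : Type*} (k : X → X → ℝ) (μ f : X → ℝ) : ℝ≥0∞ :=
  (1/2 : ℝ≥0∞) * ∑' p : X × X, ENNReal.ofReal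
    (k p.1 p.2 * (f p.2 - f p.1) * (Real.log (f p.2) - Real.log (f p.1)) * μ p.1)


/-!
Truncate `f²` to `c = min (f², m)` and normalise it to the probability density `g = c / Z`,
`Z = ∑ c μ`; boundedness makes the entropy of `g` finite, so `EI(Φ)` applies and bounds it by
`α (log (A Z + I(c) / β) - log Z)`. Gibbs' inequality against the density `√c / S`, `S = ∑ √c μ`,
bounds the same entropy from below by `log Z - 2 log S`. Together,
`Z ^ (α + 1) ≤ (A Z + I(c) / β) ^ α S²`. Truncation only decreases `Z`, `S` and `I`, and
`Z → ‖f‖₂²` as `m → ∞`. When `I(f²) = ∞` the right-hand side is `∞`.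
-/

section Fisher

variable {X : Type*} {k : X → X → ℝ} {μ f : X → ℝ}

lemma sub_mul_log_sub_log_nonneg {a b : ℝ} (ha : 0 < a) (hb : 0 < b) :
    0 ≤ (a - b) * (log a - log b) := by
  rcases le_total b a with h | h
  · exact mul_nonneg (sub_nonneg.2 h) (sub_nonneg.2 (log_le_log hb h))
  · exact mul_nonneg_of_nonpos_of_nonpos (sub_nonpos.2 h) (sub_nonpos.2 (log_le_log ha h))

lemma abs_min_sub_min_le_abs {α : Type*} [AddCommGroup α] [LinearOrder α] [IsOrderedAddMonoid α]
    (a b c : α) : |min a c - min b c| ≤ |a - b| := by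
  simpa only [sub_self, abs_zero, max_eq_left (abs_nonneg (a - b))]
    using abs_min_sub_min_le_max a c b c

/-- Truncation at level `m` is a contraction for both `t` and `log t`. -/
lemma sub_mul_log_sub_log_min_le {a b m : ℝ} (ha : 0 < a) (hb : 0 < b) (hm : 0 < m) :
    (min a m - min b m) * (log (min a m) - log (min b m)) ≤ (a - b) * (log a - log b) := by
  have log_min (t : ℝ) (ht : 0 < t) : log (min t m) = min (log t) (log m) := by
    rcases le_total t m with h | h
    · rw [min_eq_left h, min_eq_left (log_le_log ht h)]
    · rw [min_eq_right h, min_eq_right (log_le_log hm h)]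
  rw [← abs_of_nonneg (sub_mul_log_sub_log_nonneg (lt_min ha hm) (lt_min hb hm)),
    ← abs_of_nonneg (sub_mul_log_sub_log_nonneg ha hb), abs_mul, abs_mul,
    log_min a ha, log_min b hb]
  exact mul_le_mul (abs_min_sub_min_le_abs _ _ _) (abs_min_sub_min_le_abs _ _ _)
    (abs_nonneg _) (abs_nonneg _)

lemma mul_log_add_sub_le_mul_log {a b : ℝ} (ha : 0 < a) (hb : 0 < b) :
    a * log b + a - b ≤ a * log a := by
  have h := mul_le_mul_of_nonneg_left (log_le_sub_one_of_pos (div_pos hb ha)) ha.le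
  rw [log_div hb.ne' ha.ne', mul_sub, mul_sub, mul_div_cancel₀ _ ha.ne'] at h
  linarith

noncomputable def fisherSummand (k : X → X → ℝ) (μ f : X → ℝ) (p : X × X) : ℝ :=
  k p.1 p.2 * (f p.2 - f p.1) * (log (f p.2) - log (f p.1)) * μ p.1

lemma fisherFn_eq_tsum : fisherFn k μ f = 1 / 2 * ∑' p, fisherSummand k μ f p := rfl

lemma fisherFinite_iff : FisherFinite k μ f ↔ Summable (fisherSummand k μ f) := Iff.rfl

lemma fisherE_eq_tsum :
    fisherE k μ f = 1 / 2 * ∑' p, ENNReal.ofReal (fisherSummand k μ f p) := rfl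

lemma fisherSummand_div_const (hf : ∀ x, f x ≠ 0) {Z : ℝ} (hZ : Z ≠ 0) (p : X × X) :
    fisherSummand k μ (fun x => f x / Z) p = fisherSummand k μ f p / Z := by
  simp only [fisherSummand, log_div (hf _) hZ]
  ring

section Nonneg

variable (hk : ∀ x y, x ≠ y → 0 ≤ k x y) (hμ : ∀ x, 0 ≤ μ x) (hf : ∀ x, 0 < f x)
include hk hμ hf

lemma fisherSummand_nonneg (p : X × X) : 0 ≤ fisherSummand k μ f p := by
  obtain ⟨x, y⟩ := p
  rcases eq_or_ne x y with rfl | hxy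
  · simp [fisherSummand]
  · have h := mul_nonneg (mul_nonneg (hk x y hxy) (sub_mul_log_sub_log_nonneg (hf y) (hf x)))
      (hμ x)
    simp only [fisherSummand]
    linarith

lemma fisherSummand_min_le {m : ℝ} (hm : 0 < m) (p : X × X) :
    fisherSummand k μ (fun x => min (f x) m) p ≤ fisherSummand k μ f p := by
  obtain ⟨x, y⟩ := p
  rcases eq_or_ne x y with rfl | hxy
  · simp [fisherSummand]
  · have h := mul_le_mul_of_nonneg_right (mul_le_mul_of_nonneg_left
      (sub_mul_log_sub_log_min_le (hf y) (hf x) hm) (hk x y hxy)) (hμ x)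
    simp only [fisherSummand]
    linarith

lemma fisherFn_nonneg : 0 ≤ fisherFn k μ f := by
  rw [fisherFn_eq_tsum]
  exact mul_nonneg (by norm_num) (tsum_nonneg (fisherSummand_nonneg hk hμ hf))

lemma FisherFinite.min {m : ℝ} (hm : 0 < m) (hI : FisherFinite k μ f) :
    FisherFinite k μ (fun x => min (f x) m) :=
  hI.of_nonneg_of_le (fisherSummand_nonneg hk hμ fun x => lt_min (hf x) hm)
    (fisherSummand_min_le hk hμ hf hm)

lemma fisherFn_min_le {m : ℝ} (hm : 0 < m) (hI : FisherFinite k μ f) :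
    fisherFn k μ (fun x => min (f x) m) ≤ fisherFn k μ f := by
  rw [fisherFn_eq_tsum, fisherFn_eq_tsum]
  gcongr 1 / 2 * ?_
  exact (hI.min hk hμ hf hm).tsum_le_tsum (fisherSummand_min_le hk hμ hf hm) hI

lemma fisherE_eq_ofReal (hI : FisherFinite k μ f) :
    fisherE k μ f = ENNReal.ofReal (fisherFn k μ f) := by
  rw [fisherE_eq_tsum, fisherFn_eq_tsum, ENNReal.ofReal_mul (by norm_num),
    ENNReal.ofReal_tsum_of_nonneg (fisherSummand_nonneg hk hμ hf) hI, one_div (2 : ℝ),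
    ENNReal.ofReal_inv_of_pos two_pos, ENNReal.ofReal_ofNat, one_div]

lemma fisherE_eq_top (hI : ¬FisherFinite k μ f) : fisherE k μ f = ⊤ := by
  rw [fisherE_eq_tsum, ENNReal.mul_eq_top]
  refine Or.inl ⟨by norm_num, ?_⟩
  by_contra hfin
  exact hI <| (ENNReal.summable_toReal hfin).congr fun p =>
    ENNReal.toReal_ofReal (fisherSummand_nonneg hk hμ hf p)

end Nonneg

lemma FisherFinite.div_const (hf : ∀ x, f x ≠ 0) {Z : ℝ} (hZ : Z ≠ 0)
    (hI : FisherFinite k μ f) : FisherFinite k μ (fun x => f x / Z) :=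
  ((fisherFinite_iff.1 hI).div_const Z).congr fun p => (fisherSummand_div_const hf hZ p).symm

lemma fisherFn_div_const (hf : ∀ x, f x ≠ 0) {Z : ℝ} (hZ : Z ≠ 0) :
    fisherFn k μ (fun x => f x / Z) = fisherFn k μ f / Z := by
  simp only [fisherFn_eq_tsum, fisherSummand_div_const hf hZ, tsum_div_const]
  ring

end Fisher

open scoped Topology

section Sums

variable {X : Type*} {μ f : X → ℝ}

lemma summable_abs_mul_of_summable_sq_mul (hμ : ∀ x, 0 ≤ μ x) (hμs : Summable μ)
    (hf : Summable fun x => f x ^ 2 * μ x) : Summable fun x => |f x| * μ x := by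
  refine (hf.add hμs).of_nonneg_of_le (fun x => mul_nonneg (abs_nonneg _) (hμ x)) fun x => ?_
  have h : |f x| ≤ f x ^ 2 + 1 := by nlinarith [sq_abs (f x), abs_nonneg (f x)]
  rw [← add_one_mul]
  exact mul_le_mul_of_nonneg_right h (hμ x)

lemma tendsto_tsum_min_mul (hf : ∀ x, 0 ≤ f x) (hμ : ∀ x, 0 ≤ μ x)
    (hfμ : Summable fun x => f x * μ x) :
    Tendsto (fun m => ∑' x, min (f x) m * μ x) atTop (𝓝 (∑' x, f x * μ x)) := by
  refine tendsto_tsum_of_dominated_convergence hfμ (fun x => ?_) ?_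
  · refine tendsto_const_nhds.congr' ?_
    filter_upwards [eventually_ge_atTop (f x)] with m hm
    rw [min_eq_left hm]
  · filter_upwards [eventually_ge_atTop 0] with m hm x
    rw [Real.norm_eq_abs, abs_of_nonneg (mul_nonneg (le_min (hf x) hm) (hμ x))]
    exact mul_le_mul_of_nonneg_right (min_le_left _ _) (hμ x)

lemma log_sub_two_mul_log_le_tsum_mul_log {c : X → ℝ} {Z S : ℝ} (hμ : ∀ x, 0 ≤ μ x)
    (hc : ∀ x, 0 < c x) (hZ : 0 < Z) (hS : 0 < S)
    (hcZ : HasSum (fun x => c x * μ x) Z) (hcS : HasSum (fun x => √(c x) * μ x) S)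
    (hent : Summable fun x => c x / Z * log (c x / Z) * μ x) :
    log Z - 2 * log S ≤ ∑' x, c x / Z * log (c x / Z) * μ x := by
  have hg : HasSum (fun x => c x / Z * μ x) 1 := by
    simpa only [div_mul_eq_mul_div, div_self hZ.ne'] using hcZ.div_const Z
  have hu : HasSum (fun x => √(c x) / S * μ x) 1 := by
    simpa only [div_mul_eq_mul_div, div_self hS.ne'] using hcS.div_const S
  have hpt (x : X) :
      1 / 2 * (c x / Z * log (c x / Z) * μ x) + (log Z / 2 - log S) * (c x / Z * μ x)
        + (c x / Z * μ x - √(c x) / S * μ x) ≤ c x / Z * log (c x / Z) * μ x := by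
    have h := mul_log_add_sub_le_mul_log (div_pos (hc x) hZ) (div_pos (sqrt_pos.2 (hc x)) hS)
    rw [log_div (sqrt_pos.2 (hc x)).ne' hS.ne', log_sqrt (hc x).le,
      show log (c x) = log (c x / Z) + log Z by rw [log_div (hc x).ne' hZ.ne']; ring] at h
    have h' := mul_le_mul_of_nonneg_right h (hμ x)
    linarith
  have hle := hasSum_le hpt
    (((hent.hasSum.mul_left (1 / 2)).add (hg.mul_left _)).add (hg.sub hu)) hent.hasSum
  linarith

end Sums

section Nash

variable {X : Type*} {k : X → X → ℝ} {μ : X → ℝ} {α β A : ℝ}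

lemma summable_mul_log_mul_of_mem_Icc {g : X → ℝ} {M : ℝ} (hμ : ∀ x, 0 ≤ μ x)
    (hμs : Summable μ) (hg : ∀ x, g x ∈ Icc 0 M) :
    Summable fun x => g x * log (g x) * μ x := by
  obtain ⟨K, hK⟩ := isCompact_Icc.exists_bound_of_continuousOn
    (continuous_mul_log.continuousOn (s := Icc 0 M))
  refine (hμs.mul_left K).of_norm_bounded fun x => ?_
  rw [norm_mul, Real.norm_of_nonneg (hμ x)]
  exact mul_le_mul_of_nonneg_right (hK _ (hg x)) (hμ x)

theorem EIineq.tsum_mul_log_le (hEI : EIineq k μ (fun r => α * log (A + r / β)))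
    (hk : ∀ x y, x ≠ y → 0 ≤ k x y) (hμ : ∀ x, 0 ≤ μ x) (hβ : 0 < β) (hA : 0 < A)
    {c : X → ℝ} {Z : ℝ} (hc : ∀ x, 0 < c x) (hZ : 0 < Z) (hcZ : HasSum (fun x => c x * μ x) Z)
    (hent : Summable fun x => c x / Z * log (c x / Z) * μ x) (hI : FisherFinite k μ c) :
    ∑' x, c x / Z * log (c x / Z) * μ x ≤
      α * (log (A * Z + fisherFn k μ c / β) - log Z) := by
  have hg1 : ∑' x, c x / Z * μ x = 1 := by
    simpa only [div_mul_eq_mul_div, div_self hZ.ne'] using (hcZ.div_const Z).tsum_eq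
  have h := hEI (fun x => c x / Z) (fun x => div_pos (hc x) hZ) hg1 hent
    (hI.div_const (fun x => (hc x).ne') hZ.ne')
  rw [entFn, hg1, log_one, mul_zero, sub_zero,
    fisherFn_div_const (fun x => (hc x).ne') hZ.ne'] at h
  have hC : 0 < A * Z + fisherFn k μ c / β :=
    add_pos_of_pos_of_nonneg (mul_pos hA hZ) (div_nonneg (fisherFn_nonneg hk hμ hc) hβ.le)
  rw [← log_div hC.ne' hZ.ne']
  convert h using 4
  field_simp

theorem EIineq.nash_of_bounded (hEI : EIineq k μ (fun r => α * log (A + r / β)))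
    (hk : ∀ x y, x ≠ y → 0 ≤ k x y) (hμ : ∀ x, 0 < μ x) (hμs : Summable μ) [Nonempty X]
    (hβ : 0 < β) (hA : 0 < A) {c : X → ℝ} {m : ℝ} (hc : ∀ x, 0 < c x) (hcm : ∀ x, c x ≤ m)
    (hI : FisherFinite k μ c) :
    (∑' x, c x * μ x) ^ (α + 1) ≤
      (A * ∑' x, c x * μ x + fisherFn k μ c / β) ^ α * (∑' x, √(c x) * μ x) ^ 2 := by
  obtain ⟨x₀⟩ := ‹Nonempty X›
  have hμ' : ∀ x, 0 ≤ μ x := fun x => (hμ x).le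
  have hcμ : Summable fun x => c x * μ x :=
    (hμs.mul_left m).of_nonneg_of_le (fun x => mul_nonneg (hc x).le (hμ' x))
      fun x => mul_le_mul_of_nonneg_right (hcm x) (hμ' x)
  have hsμ : Summable fun x => √(c x) * μ x :=
    (hμs.mul_left √m).of_nonneg_of_le (fun x => mul_nonneg (sqrt_nonneg _) (hμ' x))
      fun x => mul_le_mul_of_nonneg_right (sqrt_le_sqrt (hcm x)) (hμ' x)
  set Z := ∑' x, c x * μ x
  set S := ∑' x, √(c x) * μ x
  have hZ : 0 < Z := hcμ.tsum_pos (fun x => mul_nonneg (hc x).le (hμ' x)) x₀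
    (mul_pos (hc x₀) (hμ x₀))
  have hS : 0 < S := hsμ.tsum_pos (fun x => mul_nonneg (sqrt_nonneg _) (hμ' x)) x₀
    (mul_pos (sqrt_pos.2 (hc x₀)) (hμ x₀))
  have hC : 0 < A * Z + fisherFn k μ c / β :=
    add_pos_of_pos_of_nonneg (mul_pos hA hZ) (div_nonneg (fisherFn_nonneg hk hμ' hc) hβ.le)
  have hent := summable_mul_log_mul_of_mem_Icc hμ' hμs fun x =>
    ⟨(div_pos (hc x) hZ).le, div_le_div_of_nonneg_right (hcm x) hZ.le⟩
  have hupper := hEI.tsum_mul_log_le hk hμ' hβ hA hc hZ hcμ.hasSum hent hI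
  have hlower := log_sub_two_mul_log_le_tsum_mul_log hμ' hc hZ hS hcμ.hasSum hsμ.hasSum hent
  rw [← log_le_log_iff (rpow_pos_of_pos hZ _) (by positivity),
    log_mul (rpow_pos_of_pos hC _).ne' (by positivity), log_rpow hZ, log_rpow hC, log_pow]
  push_cast
  linarith

theorem EIineq.nash_min_sq (hEI : EIineq k μ (fun r => α * log (A + r / β)))
    (hk : ∀ x y, x ≠ y → 0 ≤ k x y) (hμ : ∀ x, 0 < μ x) (hμs : Summable μ) [Nonempty X]
    (hα : 0 ≤ α) (hβ : 0 < β) (hA : 0 < A) {f : X → ℝ}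
    (hf2 : Summable fun x => f x ^ 2 * μ x) (hne : ∀ x, f x ≠ 0)
    (hI : FisherFinite k μ (fun x => f x ^ 2)) {m : ℝ} (hm : 0 < m) :
    (∑' x, min (f x ^ 2) m * μ x) ^ (α + 1) ≤
      (A * ∑' x, f x ^ 2 * μ x + fisherFn k μ (fun x => f x ^ 2) / β) ^ α *
        (∑' x, |f x| * μ x) ^ 2 := by
  have hμ' : ∀ x, 0 ≤ μ x := fun x => (hμ x).le
  have hf2pos : ∀ x, 0 < f x ^ 2 := fun x => sq_pos_of_ne_zero (hne x)
  have hc : ∀ x, 0 < min (f x ^ 2) m := fun x => lt_min (hf2pos x) hm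
  have hsqrt : ∀ x, √(min (f x ^ 2) m) ≤ |f x| := fun x =>
    (sqrt_le_sqrt (min_le_left _ _)).trans (sqrt_sq_eq_abs (f x)).le
  have hL := summable_abs_mul_of_summable_sq_mul hμ' hμs hf2
  have hZ : ∑' x, min (f x ^ 2) m * μ x ≤ ∑' x, f x ^ 2 * μ x :=
    (hf2.of_nonneg_of_le (fun x => mul_nonneg (hc x).le (hμ' x)) fun x =>
      mul_le_mul_of_nonneg_right (min_le_left _ _) (hμ' x)).tsum_le_tsum
      (fun x => mul_le_mul_of_nonneg_right (min_le_left _ _) (hμ' x)) hf2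
  have hS : ∑' x, √(min (f x ^ 2) m) * μ x ≤ ∑' x, |f x| * μ x :=
    (hL.of_nonneg_of_le (fun x => mul_nonneg (sqrt_nonneg _) (hμ' x)) fun x =>
      mul_le_mul_of_nonneg_right (hsqrt x) (hμ' x)).tsum_le_tsum
      (fun x => mul_le_mul_of_nonneg_right (hsqrt x) (hμ' x)) hL
  have hIm := fisherFn_min_le hk hμ' hf2pos hm hI
  have hCm : 0 ≤ A * ∑' x, min (f x ^ 2) m * μ x + fisherFn k μ (fun x => min (f x ^ 2) m) / β :=
    add_nonneg (mul_nonneg hA.le (tsum_nonneg fun x => mul_nonneg (hc x).le (hμ' x)))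
      (div_nonneg (fisherFn_nonneg hk hμ' hc) hβ.le)
  have hC : A * ∑' x, min (f x ^ 2) m * μ x + fisherFn k μ (fun x => min (f x ^ 2) m) / β ≤
      A * ∑' x, f x ^ 2 * μ x + fisherFn k μ (fun x => f x ^ 2) / β := by
    gcongr
  calc (∑' x, min (f x ^ 2) m * μ x) ^ (α + 1)
      ≤ (A * ∑' x, min (f x ^ 2) m * μ x + fisherFn k μ (fun x => min (f x ^ 2) m) / β) ^ α *
          (∑' x, √(min (f x ^ 2) m) * μ x) ^ 2 :=
        hEI.nash_of_bounded hk hμ hμs hβ hA hc (fun x => min_le_right _ _)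
          (hI.min hk hμ' hf2pos hm)
    _ ≤ _ :=
        mul_le_mul (rpow_le_rpow hCm hC hα)
          (pow_le_pow_left₀ (tsum_nonneg fun x => mul_nonneg (sqrt_nonneg _) (hμ' x)) hS 2)
          (sq_nonneg _) (rpow_nonneg (hCm.trans hC) _)

theorem EIineq.nash (hEI : EIineq k μ (fun r => α * log (A + r / β)))
    (hk : ∀ x y, x ≠ y → 0 ≤ k x y) (hμ : ∀ x, 0 < μ x) (hμs : Summable μ) [Nonempty X]
    (hα : 0 ≤ α) (hβ : 0 < β) (hA : 0 < A) {f : X → ℝ}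
    (hf2 : Summable fun x => f x ^ 2 * μ x) (hne : ∀ x, f x ≠ 0)
    (hI : FisherFinite k μ (fun x => f x ^ 2)) :
    (∑' x, f x ^ 2 * μ x) ^ (α + 1) ≤
      (A * ∑' x, f x ^ 2 * μ x + fisherFn k μ (fun x => f x ^ 2) / β) ^ α *
        (∑' x, |f x| * μ x) ^ 2 := by
  refine le_of_tendsto ((tendsto_tsum_min_mul (fun x => sq_nonneg (f x)) (fun x => (hμ x).le)
    hf2).rpow_const (Or.inr (by linarith))) ?_
  filter_upwards [eventually_gt_atTop 0] with m hm
  exact hEI.nash_min_sq hk hμ hμs hα hβ hA hf2 hne hI hm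

end Nash

theorem stmt_6 {X : Type*} (k : X → X → ℝ) (μ : X → ℝ)
    (hMS : MarkovSetting k μ) (α β A : ℝ) (hα : 0 < α) (hβ : 0 < β) (hA : 1 ≤ A)
    (hEI : EIineq k μ (fun r => α * Real.log (A + r / β)))
    (f : X → ℝ) (hf2 : Summable fun x => f x ^ 2 * μ x) (hne : ∀ x, f x ≠ 0) :
    ENNReal.ofReal (Real.sqrt (∑' x, f x ^ 2 * μ x) ^ (2 * α + 2)) ≤
      (ENNReal.ofReal (A * ∑' x, f x ^ 2 * μ x) +
          fisherE k μ (fun x => f x ^ 2) / ENNReal.ofReal β) ^ α *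
        ENNReal.ofReal ((∑' x, |f x| * μ x) ^ 2) := by
  obtain ⟨hk, -, -, hμ, hμ1, -⟩ := hMS
  have hμs : Summable μ := by
    by_contra h
    simp [tsum_eq_zero_of_not_summable h] at hμ1
  have : Nonempty X := by
    by_contra h
    simp [not_nonempty_iff.1 h] at hμ1
  have x₀ := Classical.arbitrary X
  have hf2pos : ∀ x, 0 < f x ^ 2 := fun x => sq_pos_of_ne_zero (hne x)
  have hN : 0 ≤ ∑' x, f x ^ 2 * μ x := tsum_nonneg fun x => mul_nonneg (sq_nonneg _) (hμ x).le
  have hL : 0 < ∑' x, |f x| * μ x :=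
    (summable_abs_mul_of_summable_sq_mul (fun x => (hμ x).le) hμs hf2).tsum_pos
      (fun x => mul_nonneg (abs_nonneg _) (hμ x).le) x₀ (mul_pos (abs_pos.2 (hne x₀)) (hμ x₀))
  by_cases hI : FisherFinite k μ (fun x => f x ^ 2)
  · have hI0 := fisherFn_nonneg hk (fun x => (hμ x).le) hf2pos
    rw [fisherE_eq_ofReal hk (fun x => (hμ x).le) hf2pos hI, ← ENNReal.ofReal_div_of_pos hβ,
      ← ENNReal.ofReal_add (by positivity) (by positivity),
      ENNReal.ofReal_rpow_of_nonneg (by positivity) hα.le, ← ENNReal.ofReal_mul (by positivity)]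
    refine ENNReal.ofReal_le_ofReal ?_
    rw [sqrt_eq_rpow, ← rpow_mul hN]
    convert hEI.nash hk hμ hμs hα.le hβ (by linarith) hf2 hne hI using 2
    ring
  · rw [fisherE_eq_top hk (fun x => (hμ x).le) hf2pos hI,
      ENNReal.top_div_of_ne_top ENNReal.ofReal_ne_top, add_top,
      ENNReal.top_rpow_of_pos hα, ENNReal.top_mul (by positivity)]
    exact le_top
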